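/- Let χ : ℤ² × ℤ² → ℤ be the bilinear form given with respect to the standard basis by the matrix [[-1,-1],[0,-1]]. Then a vector v ∈ ℤ² satisfies χ(v,v) = -1 if and only if v equals ±(1,0), ±(0,1), or ±(-1,1). -/

import Mathlib

/-!
For `v = (a, b)` one has `-chi v v = a² + ab + b²`, the norm form of the Eisenstein integers,
so the classes of square `-1` correspond to the six units `±1, ±ω, ±ω²` of `ℤ[ω]`.
Completing the square, `4 (a² + ab + b²) = (2a + b)² + 3b²`, so norm one forces `|a|, |b| ≤ 1`,
and the finitely many remaining vectors are checked directly.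
-/

/-- Euler form with matrix [[-1,-1],[0,-1]]. -/
def chi (v w : ℤ × ℤ) : ℤ := -v.1 * w.1 - v.1 * w.2 - v.2 * w.2

theorem chi_self (v : ℤ × ℤ) : chi v v = -(v.1 ^ 2 + v.1 * v.2 + v.2 ^ 2) := by
  unfold chi
  ring

theorem abs_le_one_of_sq_add_mul_add_sq_eq_one {a b : ℤ} (h : a ^ 2 + a * b + b ^ 2 = 1) :
    |b| ≤ 1 := by
  have hsq : 3 * b ^ 2 ≤ 4 := by nlinarith [sq_nonneg (2 * a + b)]
  have hb : b ^ 2 ≤ 1 := by omega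
  rwa [← sq_le_one_iff_abs_le_one]

theorem sq_add_mul_add_sq_eq_one_iff (a b : ℤ) :
    a ^ 2 + a * b + b ^ 2 = 1 ↔
      (a, b) = (1, 0) ∨ (a, b) = (-1, 0) ∨ (a, b) = (0, 1) ∨ (a, b) = (0, -1) ∨
      (a, b) = (-1, 1) ∨ (a, b) = (1, -1) := by
  simp only [Prod.mk.injEq]
  constructor
  · intro h
    have ha := abs_le_one_of_sq_add_mul_add_sq_eq_one (a := b) (b := a) (by linarith)
    have hb := abs_le_one_of_sq_add_mul_add_sq_eq_one h
    rw [abs_le] at ha hb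
    obtain ⟨ha₁, ha₂⟩ := ha
    obtain ⟨hb₁, hb₂⟩ := hb
    interval_cases a <;> interval_cases b <;> simp_all
  · rintro (⟨rfl, rfl⟩ | ⟨rfl, rfl⟩ | ⟨rfl, rfl⟩ | ⟨rfl, rfl⟩ | ⟨rfl, rfl⟩ | ⟨rfl, rfl⟩) <;> norm_num

/-- Classification of vectors of square -1 for the Euler form. -/
theorem stmt_1 (v : ℤ × ℤ) :
    chi v v = -1 ↔
      v = (1, 0) ∨ v = (-1, 0) ∨ v = (0, 1) ∨ v = (0, -1) ∨
      v = (-1, 1) ∨ v = (1, -1) := by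
  rw [chi_self, neg_inj]
  exact sq_add_mul_add_sq_eq_one_iff v.1 v.2
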